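/- arXiv:2209.09479 — 2 statements merged into one kernel-verified Lean document; each statement's English description precedes it below -/
import Mathlib

section
/- Let p be an odd prime, r ≥ 1 an integer, and χ a primitive Dirichlet character modulo p^r. Let ℓ, r₁ ≥ 0 be integers with r₁ < r - ℓ, let q' ≥ 1 be an integer with p ∤ q', and set q = p^{r₁} q'. Let a, b, m ∈ ℤ, and define C(a,b,q,m) := Σ_{β=0}^{p^r q - 1} χ(β) e( -(a+bq)β/(p^ℓ q) + mβ/(p^r q) ), and let τ_χ := Σ_{β=0}^{p^r - 1} χ(β) e(β/p^r) be the Gauss sum of χ. If p^{r₁} exactly divides m (i.e. p^{r₁} | m and p^{r₁+1} ∤ m) and a p^{r-ℓ} ≡ m (mod q'), then C(a,b,q,m) = q · χ(q') · χ̄( (m - (a+bq) p^{r-ℓ})/p^{r₁} ) · τ_χ; in all other cases C(a,b,q,m) = 0. -/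
/-!
Put `M = m - (a + b q) p^{r-ℓ}`, so that the phase is `Mβ / (p^r q)`. Writing `β = u + p^r v`,
the sum factors into a geometric sum over `v mod q`, equal to `q` or `0` according as `q ∣ M`,
times the twisted Gauss sum `∑ χ(u) e(Mu / (p^r q))`, which for `M = q s` and primitive `χ` is
`χ̄(s) τ_χ`. As `p^{r₁} ∣ p^{r-ℓ}` and `p ∤ q'`, the condition `q ∣ M` says exactly that
`p^{r₁} ∣ m` and `a p^{r-ℓ} ≡ m (mod q')`. Then `M / p^{r₁} = q' s`, and `χ(q') χ̄(q') = 1`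
gives the main formula, while `p^{r₁+1} ∣ m` forces `p ∣ s`, so that `χ̄(s) = 0`.
-/

noncomputable def e (x : ℝ) : ℂ := Complex.exp (2 * (Real.pi : ℂ) * Complex.I * (x : ℂ))

open Finset

lemma e_add (x y : ℝ) : e (x + y) = e x * e y := by
  unfold e; rw [← Complex.exp_add]; push_cast; ring_nf

lemma e_intCast_div_natCast (j : ℤ) (N : ℕ) [NeZero N] :
    e (j / N) = ZMod.stdAddChar (j : ZMod N) := by
  rw [ZMod.stdAddChar_coe, e]; push_cast; ring_nf

lemma sum_range_eq_sum_zmod {M : Type*} [AddCommMonoid M] (n : ℕ) [NeZero n] (f : ZMod n → M) :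
    ∑ i ∈ range n, f i = ∑ x : ZMod n, f x :=
  sum_nbij' (↑) ZMod.val (by simp) (by simp [ZMod.val_lt])
    (fun i hi => ZMod.val_cast_of_lt (mem_range.1 hi)) (fun x _ => ZMod.natCast_zmod_val x)
    (fun _ _ => rfl)

lemma sum_range_mul_eq_sum_sum {M : Type*} [AddCommMonoid M] (n q : ℕ) (f : ℕ → M) :
    ∑ β ∈ range (n * q), f β = ∑ v ∈ range q, ∑ u ∈ range n, f (u + n * v) := by
  rw [mul_comm, ← Fin.sum_univ_eq_sum_range, ← finProdFinEquiv.sum_comp, Fintype.sum_prod_type,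
    ← Fin.sum_univ_eq_sum_range]
  exact Fintype.sum_congr _ _ fun v => Fin.sum_univ_eq_sum_range (fun u => f (u + n * v)) n

lemma sum_range_e_intCast_mul_div (M : ℤ) (q : ℕ) [NeZero q] :
    ∑ v ∈ range q, e ((M * v : ℤ) / q) = if (q : ℤ) ∣ M then (q : ℂ) else 0 := by
  simp_rw [e_intCast_div_natCast, Int.cast_mul, Int.cast_natCast, mul_comm (M : ZMod q)]
  rw [sum_range_eq_sum_zmod q (fun x => ZMod.stdAddChar (x * (M : ZMod q))),
    AddChar.sum_mulShift _ (ZMod.isPrimitive_stdAddChar q)]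
  simp [ZMod.intCast_zmod_eq_zero_iff_dvd]

lemma sum_range_char_mul_e {n : ℕ} [NeZero n] (χ : DirichletCharacter ℂ n) (s : ℤ) :
    ∑ u ∈ range n, χ ((u : ℤ) : ZMod n) * e ((s * u : ℤ) / n) =
      gaussSum χ (ZMod.stdAddChar.mulShift (s : ZMod n)) := by
  simp_rw [e_intCast_div_natCast, Int.cast_mul, Int.cast_natCast]
  exact sum_range_eq_sum_zmod n (fun x => χ x * ZMod.stdAddChar ((s : ZMod n) * x))

lemma sum_range_mul_char_mul_e {n : ℕ} [NeZero n] (χ : DirichletCharacter ℂ n) (q : ℕ) (M : ℤ) :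
    ∑ β ∈ range (n * q), χ ((β : ℤ) : ZMod n) * e ((M * β : ℤ) / ((n : ℝ) * q)) =
      (∑ v ∈ range q, e ((M * v : ℤ) / q)) *
        ∑ u ∈ range n, χ ((u : ℤ) : ZMod n) * e ((M * u : ℤ) / ((n : ℝ) * q)) := by
  rw [sum_range_mul_eq_sum_sum, sum_mul]
  refine sum_congr rfl fun v _ => ?_
  rw [mul_sum]
  refine sum_congr rfl fun u _ => ?_
  have hχ : (((u + n * v : ℕ) : ℤ) : ZMod n) = ((u : ℤ) : ZMod n) := by simp
  have he : ((M * (u + n * v : ℕ) : ℤ) : ℝ) / (n * q) =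
      (M * u : ℤ) / (n * q) + (M * v : ℤ) / q := by
    have : (n : ℝ) ≠ 0 := NeZero.ne _
    push_cast
    field_simp
  rw [hχ, he, e_add]
  ring

lemma sum_range_mul_char_mul_e_of_isPrimitive {n : ℕ} [NeZero n] {χ : DirichletCharacter ℂ n}
    (hχ : χ.IsPrimitive) (q : ℕ) [NeZero q] (M : ℤ) :
    ∑ β ∈ range (n * q), χ ((β : ℤ) : ZMod n) * e ((M * β : ℤ) / ((n : ℝ) * q)) =
      if (q : ℤ) ∣ M then q * χ⁻¹ ((M / q : ℤ) : ZMod n) * gaussSum χ ZMod.stdAddChar else 0 := by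
  rw [sum_range_mul_char_mul_e, sum_range_e_intCast_mul_div]
  split_ifs with hqM
  · obtain ⟨s, rfl⟩ := hqM
    have he : ∀ u : ℕ, ((q * s * u : ℤ) : ℝ) / (n * q) = (s * u : ℤ) / n := fun u => by
      have : (q : ℝ) ≠ 0 := NeZero.ne _
      push_cast
      field_simp
    simp_rw [he, sum_range_char_mul_e, gaussSum_mulShift_of_isPrimitive _ hχ,
      Int.mul_ediv_cancel_left _ (NeZero.ne (q : ℤ))]
    ring
  · exact zero_mul _

lemma neg_div_pow_mul_add_div_pow_mul {K : Type*} [Field K] {P : K} (hP : P ≠ 0) {ℓ r : ℕ}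
    (hℓr : ℓ ≤ r) (x y Q : K) :
    -x / (P ^ ℓ * Q) + y / (P ^ r * Q) = (y - x * P ^ (r - ℓ)) / (P ^ r * Q) := by
  rw [← Nat.sub_add_cancel hℓr, pow_add, Nat.add_sub_cancel]
  rcases eq_or_ne Q 0 with rfl | hQ
  · simp
  · field_simp
    ring

lemma mul_dvd_sub_add_mul_mul_iff {P Q X : ℤ} (hPQ : IsCoprime P Q) (hPX : P ∣ X) (m a b : ℤ) :
    P * Q ∣ m - (a + b * (P * Q)) * X ↔ P ∣ m ∧ a * X ≡ m [ZMOD Q] := by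
  have hP : P ∣ m - (a + b * (P * Q)) * X ↔ P ∣ m := dvd_sub_left (dvd_mul_of_dvd_right hPX _)
  have hQ : Q ∣ m - (a + b * (P * Q)) * X ↔ Q ∣ m - a * X := by
    rw [show m - (a + b * (P * Q)) * X = m - a * X - Q * (b * P * X) by ring]
    exact dvd_sub_left (dvd_mul_right _ _)
  rw [Int.modEq_iff_dvd, ← hP, ← hQ]
  exact ⟨fun h => ⟨dvd_of_mul_right_dvd h, dvd_of_mul_left_dvd h⟩, fun h => hPQ.mul_dvd h.1 h.2⟩

lemma Prime.dvd_ediv_of_pow_succ_dvd {p Q : ℤ} (hp : Prime p) (hpQ : ¬ p ∣ Q) {j k : ℕ}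
    (hjk : j < k) {m c : ℤ} (hm : p ^ (j + 1) ∣ m) (hdvd : p ^ j * Q ∣ m - c * p ^ k) :
    p ∣ (m - c * p ^ k) / (p ^ j * Q) := by
  obtain ⟨s, hs⟩ := hdvd
  have h : p ^ j * p ∣ p ^ j * (Q * s) := by
    rw [← pow_succ, ← mul_assoc, ← hs]
    exact dvd_sub hm (dvd_mul_of_dvd_right (pow_dvd_pow _ hjk) _)
  have hQ : Q ≠ 0 := by rintro rfl; exact hpQ (dvd_zero p)
  rw [hs, Int.mul_ediv_cancel_left _ (mul_ne_zero (pow_ne_zero j hp.ne_zero) hQ)]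
  exact (hp.dvd_mul.1 ((mul_dvd_mul_iff_left (pow_ne_zero j hp.ne_zero)).1 h)).resolve_left hpQ

lemma DirichletCharacter.apply_mul_star_apply_ediv {n : ℕ} [NeZero n]
    (χ : DirichletCharacter ℂ n) {P Q M : ℤ} (hPQ : P * Q ≠ 0) (hQ : IsUnit (Q : ZMod n))
    (hM : P * Q ∣ M) : χ Q * star (χ ↑(M / P)) = χ⁻¹ ↑(M / (P * Q)) := by
  obtain ⟨s, rfl⟩ := hM
  rw [Int.mul_ediv_cancel_left _ hPQ, mul_assoc,
    Int.mul_ediv_cancel_left _ (left_ne_zero_of_mul hPQ), MulChar.star_apply', Int.cast_mul,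
    map_mul, ← mul_assoc, ← Pi.mul_apply, ← MulChar.coeToFun_mul, mul_inv_cancel,
    MulChar.one_apply hQ, one_mul]

lemma DirichletCharacter.apply_eq_zero_of_prime_dvd {R : Type*} [CommMonoidWithZero R]
    [Nontrivial R] {p r : ℕ} (χ : DirichletCharacter R (p ^ r)) (hp : p.Prime) (hr : r ≠ 0)
    {s : ℤ} (hs : (p : ℤ) ∣ s) : χ s = 0 := by
  have hpr : (p : ℤ) ∣ (p ^ r : ℕ) := by exact_mod_cast dvd_pow_self p hr
  exact (χ.apply_eq_zero_iff s).2 fun h =>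
    (Nat.prime_iff_prime_int.1 hp).not_isUnit (h.isUnit_of_dvd' hs hpr)

theorem stmt_3_general
    (p : ℕ) (hp : p.Prime) (r : ℕ)
    (χ : DirichletCharacter ℂ (p ^ r)) (hχ : χ.IsPrimitive)
    (ℓ r₁ : ℕ) (hr₁ : r₁ + ℓ < r)
    (q' : ℕ) (hpq' : ¬ p ∣ q')
    (q : ℕ) (hq : q = p ^ r₁ * q')
    (a b m : ℤ)
    (C τ : ℂ)
    (hC : C = ∑ β ∈ Finset.range (p ^ r * q), χ ((β : ℤ) : ZMod (p ^ r)) *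
      e (-(((a + b * q) * β : ℤ) : ℝ) / ((p : ℝ) ^ ℓ * q)
          + ((m * β : ℤ) : ℝ) / ((p : ℝ) ^ r * q)))
    (hτ : τ = ∑ β ∈ Finset.range (p ^ r), χ ((β : ℤ) : ZMod (p ^ r)) *
      e ((β : ℝ) / (p : ℝ) ^ r)) :
    (((p : ℤ) ^ r₁ ∣ m ∧ ¬ (p : ℤ) ^ (r₁ + 1) ∣ m ∧
        a * (p : ℤ) ^ (r - ℓ) ≡ m [ZMOD (q' : ℤ)]) →
      C = (q : ℂ) * χ ((q' : ℤ) : ZMod (p ^ r)) *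
        (starRingEnd ℂ)
          (χ ((((m - (a + b * q) * (p : ℤ) ^ (r - ℓ)) / (p : ℤ) ^ r₁ : ℤ)) : ZMod (p ^ r))) * τ)
    ∧ (¬ ((p : ℤ) ^ r₁ ∣ m ∧ ¬ (p : ℤ) ^ (r₁ + 1) ∣ m ∧
        a * (p : ℤ) ^ (r - ℓ) ≡ m [ZMOD (q' : ℤ)]) →
      C = 0) := by
  have : NeZero (p ^ r) := ⟨pow_ne_zero r hp.ne_zero⟩
  have : NeZero q := ⟨hq ▸ mul_ne_zero (pow_ne_zero r₁ hp.ne_zero) (by rintro rfl; simp at hpq')⟩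
  have hpZ : Prime (p : ℤ) := Nat.prime_iff_prime_int.1 hp
  have hpq'Z : ¬ (p : ℤ) ∣ q' := Int.natCast_dvd_natCast.not.2 hpq'
  have hqZ : (q : ℤ) = p ^ r₁ * q' := by rw [hq]; push_cast; rfl
  set M := m - (a + b * q) * (p : ℤ) ^ (r - ℓ) with hM
  have hCM : C = ∑ β ∈ range (p ^ r * q), χ ((β : ℤ) : ZMod (p ^ r)) *
      e ((M * β : ℤ) / (((p ^ r : ℕ) : ℝ) * q)) := by
    refine hC.trans (sum_congr rfl fun β _ => congr_arg (χ _ * e ·) ?_)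
    rw [neg_div_pow_mul_add_div_pow_mul (Nat.cast_ne_zero.2 hp.ne_zero) (by omega), hM]
    push_cast
    ring
  have hτ' : τ = gaussSum χ ZMod.stdAddChar := by simpa [hτ] using sum_range_char_mul_e χ 1
  have hiff :
      (p : ℤ) ^ r₁ * q' ∣ M ↔ (p : ℤ) ^ r₁ ∣ m ∧ a * (p : ℤ) ^ (r - ℓ) ≡ m [ZMOD q'] := by
    have hcop : IsCoprime ((p : ℤ) ^ r₁) q' := ((Prime.coprime_iff_not_dvd hpZ).2 hpq'Z).pow_left
    rw [hM, hqZ]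
    exact mul_dvd_sub_add_mul_mul_iff hcop (pow_dvd_pow _ (by omega)) m a b
  rw [hCM, sum_range_mul_char_mul_e_of_isPrimitive hχ, ← hτ', hqZ]
  constructor
  · rintro ⟨hm, -, hmod⟩
    have hunit : IsUnit ((q' : ℤ) : ZMod (p ^ r)) := by
      simpa using (ZMod.isUnit_natCast_iff_not_dvd_pow hp (by omega)).2 hpq'
    have hq0 : (p : ℤ) ^ r₁ * q' ≠ 0 := hqZ ▸ Nat.cast_ne_zero.2 (NeZero.ne q)
    rw [if_pos (hiff.2 ⟨hm, hmod⟩), mul_assoc (q : ℂ) (χ _), starRingEnd_apply,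
      χ.apply_mul_star_apply_ediv hq0 hunit (hiff.2 ⟨hm, hmod⟩)]
  · intro hfail
    split_ifs with hqM
    · obtain ⟨hm, hmod⟩ := hiff.1 hqM
      have hps : (p : ℤ) ∣ M / (p ^ r₁ * q') := hpZ.dvd_ediv_of_pow_succ_dvd hpq'Z (by omega)
        (not_not.1 fun h => hfail ⟨hm, h, hmod⟩) hqM
      rw [χ⁻¹.apply_eq_zero_of_prime_dvd hp (by omega) hps, mul_zero, zero_mul]
    · rfl

/-- **Evaluation of the complete character sum** (Lemma 3.2 of the paper).
For `χ` primitive mod `p^r`, `q = p^{r₁} q'` with `p ∤ q'` and `r₁ + ℓ < r`: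
if `p^{r₁} ∥ m` and `a p^{r-ℓ} ≡ m (mod q')` then
`C(a,b,q,m) = q χ(q') χ̄((m-(a+bq)p^{r-ℓ})/p^{r₁}) τ_χ`, and otherwise `C(a,b,q,m) = 0`. -/
theorem stmt_3
    (p : ℕ) (hp : p.Prime) (hodd : Odd p) (r : ℕ) (hr : 1 ≤ r)
    (χ : DirichletCharacter ℂ (p ^ r)) (hχ : χ.IsPrimitive)
    (ℓ r₁ : ℕ) (hr₁ : r₁ + ℓ < r)
    (q' : ℕ) (hq' : 1 ≤ q') (hpq' : ¬ p ∣ q')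
    (q : ℕ) (hq : q = p ^ r₁ * q')
    (a b m : ℤ)
    (C τ : ℂ)
    (hC : C = ∑ β ∈ Finset.range (p ^ r * q), χ ((β : ℤ) : ZMod (p ^ r)) *
      e (-(((a + b * q) * β : ℤ) : ℝ) / ((p : ℝ) ^ ℓ * q)
          + ((m * β : ℤ) : ℝ) / ((p : ℝ) ^ r * q)))
    (hτ : τ = ∑ β ∈ Finset.range (p ^ r), χ ((β : ℤ) : ZMod (p ^ r)) *
      e ((β : ℝ) / (p : ℝ) ^ r)) :
    (((p : ℤ) ^ r₁ ∣ m ∧ ¬ (p : ℤ) ^ (r₁ + 1) ∣ m ∧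
        a * (p : ℤ) ^ (r - ℓ) ≡ m [ZMOD (q' : ℤ)]) →
      C = (q : ℂ) * χ ((q' : ℤ) : ZMod (p ^ r)) *
        (starRingEnd ℂ)
          (χ ((((m - (a + b * q) * (p : ℤ) ^ (r - ℓ)) / (p : ℤ) ^ r₁ : ℤ)) : ZMod (p ^ r))) * τ)
    ∧ (¬ ((p : ℤ) ^ r₁ ∣ m ∧ ¬ (p : ℤ) ^ (r₁ + 1) ∣ m ∧
        a * (p : ℤ) ^ (r - ℓ) ≡ m [ZMOD (q' : ℤ)]) →
      C = 0) :=
  stmt_3_general p hp r χ hχ ℓ r₁ hr₁ q' hpq' q hq a b m C τ hC hτ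
end

section
/- For every integer j ≥ 1 and every real A ≥ 1 there exists a constant C = C(j, A) such that the following holds: for every smooth function w : ℝ → ℂ supported in [1,2] with |w^{(i)}(y)| ≤ A for all 0 ≤ i ≤ j and all y ∈ ℝ, and for all real numbers a and b with |b| ≥ 1 and |b| ≥ 4|a|, one has | ∫_ℝ w(y) e( a y + b √y ) dy | ≤ C |b|^{-j}. -/
/-!
Substituting `y = u²` turns the phase into the quadratic `a u² + b u`. Its derivative
`2au + b` has size at least `|b|/4` wherever the new weight `2u w(u²)` lives, and the
derivatives `(-1)ⁿ n! (2a)ⁿ (2au + b)⁻ⁿ⁻¹` of its reciprocal are all `O(|b|⁻¹)`. Integrating by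
parts against `e(au² + bu)` replaces `v` by `(v / (2au + b))'` up to the factor `-(2πi)⁻¹`,
and by the Leibniz rule this gains a factor `|b|⁻¹` at the cost of one derivative;
`j` steps give `|b|⁻ʲ`.
-/

open MeasureTheory Set Filter Topology Complex Function
open scoped ContDiff Nat

namespace NonstationaryPhase

lemma norm_e (x : ℝ) : ‖e x‖ = 1 := by
  simp [e, norm_exp]

lemma continuous_e : Continuous e := by
  unfold e; fun_prop

lemma hasDerivAt_e_comp {θ : ℝ → ℝ} {θ' x : ℝ} (h : HasDerivAt θ θ' x) :
    HasDerivAt (fun u => e (θ u)) (2 * Real.pi * I * θ' * e (θ x)) x :=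
  ((h.ofReal_comp.const_mul (2 * (Real.pi : ℂ) * I)).cexp).congr_deriv (mul_comm _ _)

section Leibniz

variable {F : Type*} [NormedAddCommGroup F] [NormedSpace ℝ F]

lemma norm_iteratedFDerivWithin_eq_norm_iteratedDeriv_of_isOpen {f : ℝ → F} {s : Set ℝ} {x : ℝ}
    (hs : IsOpen s) (hx : x ∈ s) (n : ℕ) :
    ‖iteratedFDerivWithin ℝ n f s x‖ = ‖iteratedDeriv n f x‖ := by
  rw [iteratedFDerivWithin_of_isOpen n hs hx, norm_iteratedFDeriv_eq_norm_iteratedDeriv]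

lemma norm_iteratedDeriv_smul_le_of_isOpen {f : ℝ → ℝ} {g : ℝ → F} {s : Set ℝ} {n : ℕ} {x Bf Bg : ℝ}
    (hs : IsOpen s) (hf : ContDiffOn ℝ n f s) (hg : ContDiffOn ℝ n g s) (hx : x ∈ s)
    (hBf : ∀ i ≤ n, ‖iteratedDeriv i f x‖ ≤ Bf) (hBg : ∀ i ≤ n, ‖iteratedDeriv i g x‖ ≤ Bg) :
    ‖iteratedDeriv n (fun y => f y • g y) x‖ ≤ 2 ^ n * Bf * Bg := by
  have hBf0 : 0 ≤ Bf := (norm_nonneg _).trans (hBf 0 n.zero_le)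
  have hBg0 : 0 ≤ Bg := (norm_nonneg _).trans (hBg 0 n.zero_le)
  calc ‖iteratedDeriv n (fun y => f y • g y) x‖
      = ‖iteratedFDerivWithin ℝ n (fun y => f y • g y) s x‖ :=
        (norm_iteratedFDerivWithin_eq_norm_iteratedDeriv_of_isOpen hs hx n).symm
    _ ≤ ∑ i ∈ Finset.range (n + 1), (n.choose i : ℝ) * ‖iteratedFDerivWithin ℝ i f s x‖ *
          ‖iteratedFDerivWithin ℝ (n - i) g s x‖ :=
      norm_iteratedFDerivWithin_smul_le hf hg hs.uniqueDiffOn hx le_rfl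
    _ ≤ ∑ i ∈ Finset.range (n + 1), (n.choose i : ℝ) * Bf * Bg := by
      gcongr with i hi
      · rw [norm_iteratedFDerivWithin_eq_norm_iteratedDeriv_of_isOpen hs hx]
        exact hBf i (Nat.lt_succ_iff.mp (Finset.mem_range.mp hi))
      · rw [norm_iteratedFDerivWithin_eq_norm_iteratedDeriv_of_isOpen hs hx]
        exact hBg _ (n.sub_le i)
    _ = 2 ^ n * Bf * Bg := by
      rw [← Finset.sum_mul, ← Finset.sum_mul, ← Nat.cast_sum, Nat.sum_range_choose, Nat.cast_pow,
        Nat.cast_ofNat]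

end Leibniz

lemma two_pi_I_mul_integral_mul_e {θ θ' ρ : ℝ → ℝ} {v : ℝ → ℂ} {α β : ℝ}
    (hθ : ∀ x, HasDerivAt θ (θ' x) x) (hθ' : Continuous θ')
    (hρ : ∀ x ∈ uIcc α β, ρ x * θ' x = 1) (hG : ContDiff ℝ 1 (fun x => ρ x • v x))
    (hα : v α = 0) (hβ : v β = 0) :
    2 * Real.pi * I * ∫ x in α..β, v x * e (θ x) =
      -∫ x in α..β, deriv (fun x => ρ x • v x) x * e (θ x) := by
  have hθc : Continuous θ := continuous_iff_continuousAt.mpr fun x => (hθ x).continuousAt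
  have hibp := intervalIntegral.integral_mul_deriv_eq_deriv_mul
    (fun x _ => (hG.differentiable one_ne_zero x).hasDerivAt) (fun x _ => hasDerivAt_e_comp (hθ x))
    ((hG.continuous_deriv le_rfl).intervalIntegrable α β)
    ((by fun_prop : Continuous fun x => 2 * (Real.pi : ℂ) * I * θ' x).mul
      (continuous_e.comp hθc) |>.intervalIntegrable α β)
  rw [← intervalIntegral.integral_const_mul, intervalIntegral.integral_congr (fun x hx => ?_),
    hibp]
  · simp [hα, hβ]
  · have h1 : (ρ x : ℂ) * θ' x = 1 := mod_cast hρ x hx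
    simp only [real_smul]
    linear_combination (-2 * Real.pi * I * v x * e (θ x)) * h1

lemma contDiff_smul_of_tsupport_subset {E F : Type*} [NormedAddCommGroup E] [NormedSpace ℝ E]
    [NormedAddCommGroup F] [NormedSpace ℝ F] {f : E → ℝ} {g : E → F} {s : Set E}
    {n : WithTop ℕ∞} (hs : IsOpen s) (hf : ContDiffOn ℝ n f s) (hg : ContDiff ℝ n g)
    (hgs : tsupport g ⊆ s) : ContDiff ℝ n (fun x => f x • g x) := by
  refine contDiff_iff_contDiffAt.mpr fun x => ?_
  by_cases hx : x ∈ s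
  · exact (hf.contDiffAt (hs.mem_nhds hx)).smul hg.contDiffAt
  · refine contDiffAt_const (c := 0).congr_of_eventuallyEq ?_
    filter_upwards [notMem_tsupport_iff_eventuallyEq.mp (fun h => hx (hgs h))] with y hy
    simp [hy]

lemma norm_iteratedDeriv_sq_le {x : ℝ} (hx : |x| ≤ 3 / 2) (n : ℕ) :
    ‖iteratedDeriv n (fun y : ℝ => y ^ 2) x‖ ≤ 3 := by
  rw [iteratedDeriv_eq_iterate, iter_deriv_pow, Real.norm_eq_abs]
  rcases n with _ | _ | _ | n <;> norm_num [Finset.prod_range_succ', abs_mul] <;>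
    nlinarith [abs_nonneg x, sq_abs x]

section Annulus

def annulus : Set ℝ := (fun u : ℝ => u ^ 2) ⁻¹' Icc 1 2

lemma isClosed_annulus : IsClosed annulus :=
  isClosed_Icc.preimage (continuous_pow 2)

lemma abs_le_of_mem_annulus {u : ℝ} (hu : u ∈ annulus) : |u| ≤ 3 / 2 :=
  abs_le_of_sq_le_sq' (by nlinarith [hu.2]) (by norm_num) |> abs_le.mpr

variable {v : ℝ → ℂ}

lemma tsupport_subset_annulus (hv : support v ⊆ annulus) : tsupport v ⊆ annulus :=
  closure_minimal hv isClosed_annulus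

lemma eq_zero_of_notMem_annulus (hsupp : support v ⊆ annulus) {u : ℝ} (hu : u ∉ annulus) :
    v u = 0 :=
  notMem_support.mp fun h => hu (hsupp h)

lemma norm_le_of_forall_mem_annulus {M : ℝ} (hsupp : support v ⊆ annulus)
    (hM : ∀ u ∈ annulus, ‖v u‖ ≤ M) (u : ℝ) : ‖v u‖ ≤ M := by
  by_cases hu : u ∈ annulus
  · exact hM u hu
  · rw [eq_zero_of_notMem_annulus hsupp hu, norm_zero]
    exact (norm_nonneg _).trans (hM 1 (by norm_num [annulus]))

end Annulus

section QuadraticPhase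

variable {a b : ℝ} {v : ℝ → ℂ}

lemma abs_le_four_mul_abs_linear (hab : 4 * |a| ≤ |b|) {u : ℝ} (hu : |u| ≤ 3 / 2) :
    |b| ≤ 4 * |2 * a * u + b| := by
  have h2au : |2 * a * u| ≤ 3 * |a| := by
    rw [abs_mul, abs_mul, abs_two]; nlinarith [abs_nonneg a]
  have : |b| ≤ |2 * a * u + b| + |2 * a * u| := by
    simpa using abs_sub (2 * a * u + b) (2 * a * u)
  linarith

lemma linear_ne_zero (hb : b ≠ 0) (hab : 4 * |a| ≤ |b|) {u : ℝ} (hu : |u| ≤ 3 / 2) :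
    2 * a * u + b ≠ 0 := by
  intro h
  have := abs_le_four_mul_abs_linear hab hu
  rw [h, abs_zero, mul_zero] at this
  exact hb (abs_nonpos_iff.mp this)

lemma norm_iteratedDeriv_inv_linear_le (hb : b ≠ 0) (hab : 4 * |a| ≤ |b|) {u : ℝ}
    (hu : |u| ≤ 3 / 2) (n : ℕ) :
    ‖iteratedDeriv n (fun u => (2 * a * u + b)⁻¹) u‖ ≤ 4 * 2 ^ n * n ! / |b| := by
  have hz := abs_le_four_mul_abs_linear hab hu
  have hb0 : 0 < |b| := abs_pos.mpr hb
  have ha : |2 * a| ≤ |b| / 2 := by rw [abs_mul, abs_two]; linarith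
  have hformula : iteratedDeriv n (fun u => (2 * a * u + b)⁻¹) u =
      (-1) ^ n * n ! * (2 * a) ^ n * ((2 * a * u + b) ^ (n + 1))⁻¹ := by
    rw [iteratedDeriv_eq_iterate, iter_deriv_inv_linear,
      show (-1 - n : ℤ) = -(n + 1 : ℕ) by push_cast; ring]
    simp only [zpow_neg, zpow_natCast]
  calc ‖iteratedDeriv n (fun u => (2 * a * u + b)⁻¹) u‖
      = n ! * |2 * a| ^ n / |2 * a * u + b| ^ (n + 1) := by
        rw [hformula, Real.norm_eq_abs]; simp [abs_mul, abs_pow, div_eq_mul_inv]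
    _ ≤ n ! * (|b| / 2) ^ n / (|b| / 4) ^ (n + 1) := by gcongr; linarith
    _ = 4 * 2 ^ n * n ! / |b| := by
        rw [div_pow, div_pow, pow_succ, pow_succ 4, show (4 : ℝ) ^ n = 2 ^ n * 2 ^ n by
          rw [← mul_pow]; norm_num]
        field_simp

noncomputable def ibpOp (a b : ℝ) (v : ℝ → ℂ) : ℝ → ℂ :=
  deriv fun u => (2 * a * u + b)⁻¹ • v u


lemma contDiff_inv_linear_smul (hb : b ≠ 0) (hab : 4 * |a| ≤ |b|) (hv : ContDiff ℝ ∞ v)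
    (hsupp : support v ⊆ annulus) : ContDiff ℝ ∞ fun u => (2 * a * u + b)⁻¹ • v u :=
  contDiff_smul_of_tsupport_subset (isOpen_ne_fun (by fun_prop) continuous_const)
    ((by fun_prop : ContDiff ℝ ∞ fun u : ℝ => 2 * a * u + b).contDiffOn.inv fun _ hu => hu) hv
    fun u hu => linear_ne_zero hb hab (abs_le_of_mem_annulus (tsupport_subset_annulus hsupp hu))

lemma contDiff_ibpOp (hb : b ≠ 0) (hab : 4 * |a| ≤ |b|) (hv : ContDiff ℝ ∞ v)
    (hsupp : support v ⊆ annulus) : ContDiff ℝ ∞ (ibpOp a b v) :=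
  (contDiff_infty_iff_deriv.mp (contDiff_inv_linear_smul hb hab hv hsupp)).2

lemma support_ibpOp_subset (hsupp : support v ⊆ annulus) : support (ibpOp a b v) ⊆ annulus :=
  support_deriv_subset.trans <| (tsupport_smul_subset_right (fun u => (2 * a * u + b)⁻¹) v).trans
    (tsupport_subset_annulus hsupp)

lemma norm_iteratedDeriv_ibpOp_le (hb : b ≠ 0) (hab : 4 * |a| ≤ |b|) (hv : ContDiff ℝ ∞ v)
    {n : ℕ} {M : ℝ} (hM : ∀ i ≤ n + 1, ∀ u ∈ annulus, ‖iteratedDeriv i v u‖ ≤ M)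
    {i : ℕ} (hi : i ≤ n) {u : ℝ} (hu : u ∈ annulus) :
    ‖iteratedDeriv i (ibpOp a b v) u‖ ≤ 4 ^ (n + 2) * (n + 1)! * M / |b| := by
  have hM0 : 0 ≤ M := (norm_nonneg _).trans (hM 0 (Nat.zero_le _) u hu)
  have hu' := abs_le_of_mem_annulus hu
  set s := {u : ℝ | 2 * a * u + b ≠ 0}
  have hs : IsOpen s := isOpen_ne_fun (by fun_prop) continuous_const
  have hρ : ContDiffOn ℝ (i + 1) (fun u : ℝ => (2 * a * u + b)⁻¹) s :=
    (by fun_prop : ContDiff ℝ (i + 1) fun u : ℝ => 2 * a * u + b).contDiffOn.inv fun _ hu => hu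
  rw [ibpOp, ← iteratedDeriv_succ']
  calc ‖iteratedDeriv (i + 1) (fun u => (2 * a * u + b)⁻¹ • v u) u‖
      ≤ 2 ^ (i + 1) * (4 * 2 ^ (n + 1) * (n + 1)! / |b|) * M := by
        refine norm_iteratedDeriv_smul_le_of_isOpen hs hρ
          (hv.of_le (by exact_mod_cast le_top)).contDiffOn (linear_ne_zero hb hab hu')
          (fun k hk => ?_) (fun k hk => hM k (by omega) u hu)
        refine (norm_iteratedDeriv_inv_linear_le hb hab hu' k).trans ?_
        gcongr
        · norm_num
        · omega
        · omega
    _ ≤ 2 ^ (n + 1) * (4 * 2 ^ (n + 1) * (n + 1)! / |b|) * M := by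
        gcongr
        · norm_num
    _ = 4 ^ (n + 2) * (n + 1)! * M / |b| := by
        rw [pow_succ 4, show (4 : ℝ) ^ (n + 1) = 2 ^ (n + 1) * 2 ^ (n + 1) by
          rw [← mul_pow]; norm_num]
        ring

lemma two_pi_I_mul_integral_eq_neg_integral_ibpOp (hb : b ≠ 0) (hab : 4 * |a| ≤ |b|)
    (hv : ContDiff ℝ ∞ v) (hsupp : support v ⊆ annulus) :
    2 * Real.pi * I * ∫ u in (0 : ℝ)..3 / 2, v u * e (a * u ^ 2 + b * u) =
      -∫ u in (0 : ℝ)..3 / 2, ibpOp a b v u * e (a * u ^ 2 + b * u) := by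
  refine two_pi_I_mul_integral_mul_e (θ' := fun u => 2 * a * u + b)
    (fun u => ?_) (by fun_prop) (fun u hu => inv_mul_cancel₀ (linear_ne_zero hb hab ?_))
    ((contDiff_inv_linear_smul hb hab hv hsupp).of_le (by exact_mod_cast le_top))
    (eq_zero_of_notMem_annulus hsupp (by norm_num [annulus]))
    (eq_zero_of_notMem_annulus hsupp (by norm_num [annulus]))
  · exact (((hasDerivAt_pow 2 u).const_mul a).add ((hasDerivAt_id u).const_mul b)).congr_deriv
      (by push_cast; ring)
  · rw [Set.uIcc_of_le (by norm_num)] at hu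
    exact abs_le.mpr ⟨by linarith [hu.1], hu.2⟩

theorem exists_norm_integral_quadratic_phase_le (j : ℕ) :
    ∃ C > 0, ∀ a b : ℝ, b ≠ 0 → 4 * |a| ≤ |b| → ∀ (M : ℝ) (v : ℝ → ℂ), ContDiff ℝ ∞ v →
      support v ⊆ annulus → (∀ i ≤ j, ∀ u ∈ annulus, ‖iteratedDeriv i v u‖ ≤ M) →
      ‖∫ u in (0 : ℝ)..3 / 2, v u * e (a * u ^ 2 + b * u)‖ ≤ C * M / |b| ^ j := by
  induction j with
  | zero =>
    refine ⟨3 / 2, by norm_num, fun a b _ _ M v _ hsupp hM => ?_⟩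
    have hv : ∀ u, ‖v u‖ ≤ M := norm_le_of_forall_mem_annulus hsupp (hM 0 le_rfl)
    calc ‖∫ u in (0 : ℝ)..3 / 2, v u * e (a * u ^ 2 + b * u)‖ ≤ M * |3 / 2 - 0| :=
          intervalIntegral.norm_integral_le_of_norm_le_const fun u _ => by
            rw [norm_mul, norm_e, mul_one]; exact hv u
      _ = 3 / 2 * M / |b| ^ 0 := by norm_num [mul_comm]
  | succ j ih =>
    obtain ⟨C, hC, ih⟩ := ih
    refine ⟨C * (4 ^ (j + 2) * (j + 1)!), by positivity, fun a b hb hab M v hv hsupp hM => ?_⟩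
    have hb0 : 0 < |b| := abs_pos.mpr hb
    have hibp := congrArg norm (two_pi_I_mul_integral_eq_neg_integral_ibpOp hb hab hv hsupp)
    rw [norm_mul, norm_neg] at hibp
    have h2pi : 1 ≤ ‖2 * (Real.pi : ℂ) * I‖ := by
      simpa [abs_of_pos Real.pi_pos] using (by linarith [Real.pi_gt_three] : (1 : ℝ) ≤ 2 * Real.pi)
    calc ‖∫ u in (0 : ℝ)..3 / 2, v u * e (a * u ^ 2 + b * u)‖
        ≤ ‖∫ u in (0 : ℝ)..3 / 2, ibpOp a b v u * e (a * u ^ 2 + b * u)‖ := by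
          rw [← hibp]; exact le_mul_of_one_le_left (norm_nonneg _) h2pi
      _ ≤ C * (4 ^ (j + 2) * (j + 1)! * M / |b|) / |b| ^ j :=
          ih a b hb hab _ _ (contDiff_ibpOp hb hab hv hsupp) (support_ibpOp_subset hsupp)
            fun i hi u hu => norm_iteratedDeriv_ibpOp_le hb hab hv hM hi hu
      _ = C * (4 ^ (j + 2) * (j + 1)!) * M / |b| ^ (j + 1) := by
          field_simp; ring

end QuadraticPhase

lemma integral_eq_integral_sq {w : ℝ → ℂ} (hw : Continuous w) (hsupp : support w ⊆ Icc 1 2)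
    (a b : ℝ) :
    ∫ y, w y * e (a * y + b * √y) =
      ∫ u in (0 : ℝ)..3 / 2, (2 * u) • w (u ^ 2) * e (a * u ^ 2 + b * u) := by
  set g := fun y => w y * e (a * y + b * √y)
  have hg : Continuous g := hw.mul (continuous_e.comp (by fun_prop))
  have hgsupp (y : ℝ) (hy : y ∉ Ioc 0 (9 / 4)) : g y = 0 := by
    by_contra h
    have hy' := hsupp (left_ne_zero_of_mul h)
    exact hy ⟨by linarith [hy'.1], by linarith [hy'.2]⟩
  have hsub := intervalIntegral.integral_deriv_smul_comp (a := 0) (b := 3 / 2)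
    (f := fun u => u ^ 2) (f' := fun u => 2 * u) (fun u _ => by simpa using hasDerivAt_pow 2 u)
    (by fun_prop : Continuous fun u : ℝ => 2 * u).continuousOn hg
  rw [zero_pow two_ne_zero] at hsub
  rw [← setIntegral_eq_integral_of_forall_compl_eq_zero hgsupp,
    ← intervalIntegral.integral_of_le (by norm_num), show (9 / 4 : ℝ) = (3 / 2) ^ 2 by norm_num,
    ← hsub]
  refine intervalIntegral.integral_congr fun u hu => ?_
  rw [Set.uIcc_of_le (by norm_num)] at hu
  simp only [g, Function.comp, smul_mul_assoc, Real.sqrt_sq hu.1]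

section SquareSubstitution

variable {w : ℝ → ℂ} {j : ℕ} {A : ℝ}

lemma norm_iteratedDeriv_comp_sq_le (hw : ContDiff ℝ ∞ w)
    (hA : ∀ i ≤ j, ∀ y, ‖iteratedDeriv i w y‖ ≤ A) {u : ℝ} (hu : |u| ≤ 3 / 2) {m : ℕ}
    (hm : m ≤ j) : ‖iteratedDeriv m (fun u => w (u ^ 2)) u‖ ≤ m ! * A * 3 ^ m := by
  rw [← norm_iteratedFDeriv_eq_norm_iteratedDeriv]
  refine norm_iteratedFDeriv_comp_le hw (contDiff_id.pow 2) (by exact_mod_cast le_top) u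
    (fun i hi => ?_) (fun i hi _ => ?_)
  · rw [norm_iteratedFDeriv_eq_norm_iteratedDeriv]; exact hA i (hi.trans hm) _
  · rw [norm_iteratedFDeriv_eq_norm_iteratedDeriv]
    exact (norm_iteratedDeriv_sq_le hu i).trans (le_self_pow₀ (by norm_num) (by omega))

lemma norm_iteratedDeriv_two_mul_le {u : ℝ} (hu : |u| ≤ 3 / 2) (n : ℕ) :
    ‖iteratedDeriv n (fun y : ℝ => 2 * y) u‖ ≤ 3 := by
  have hderiv : deriv (fun y : ℝ => y ^ 2) = fun y => 2 * y := by ext y; simp [mul_comm]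
  rw [← hderiv, ← iteratedDeriv_succ']
  exact norm_iteratedDeriv_sq_le hu _

lemma norm_iteratedDeriv_sq_weight_le (hw : ContDiff ℝ ∞ w)
    (hA : ∀ i ≤ j, ∀ y, ‖iteratedDeriv i w y‖ ≤ A) {u : ℝ} (hu : |u| ≤ 3 / 2) {i : ℕ}
    (hi : i ≤ j) : ‖iteratedDeriv i (fun u => (2 * u) • w (u ^ 2)) u‖ ≤ 3 * 6 ^ j * j ! * A := by
  have hA0 : 0 ≤ A := (norm_nonneg _).trans (hA 0 (Nat.zero_le _) 0)
  calc ‖iteratedDeriv i (fun u => (2 * u) • w (u ^ 2)) u‖ ≤ 2 ^ i * 3 * (j ! * A * 3 ^ j) := by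
        refine norm_iteratedDeriv_smul_le_of_isOpen isOpen_univ (by fun_prop)
          ((hw.comp (contDiff_id.pow 2)).of_le (by exact_mod_cast le_top)).contDiffOn
          (mem_univ u)
          (fun k _ => norm_iteratedDeriv_two_mul_le hu k) fun k hk => ?_
        refine (norm_iteratedDeriv_comp_sq_le hw hA hu (hk.trans hi)).trans ?_
        gcongr
        all_goals first | omega | norm_num
    _ ≤ 2 ^ j * 3 * (j ! * A * 3 ^ j) := by gcongr; norm_num
    _ = 3 * 6 ^ j * j ! * A := by rw [show (6 : ℝ) = 2 * 3 by norm_num, mul_pow]; ring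

lemma support_sq_weight_subset (hsupp : support w ⊆ Icc 1 2) :
    support (fun u => (2 * u) • w (u ^ 2)) ⊆ annulus :=
  fun _ hu => hsupp (right_ne_zero_of_smul hu)

end SquareSubstitution

end NonstationaryPhase

open NonstationaryPhase

theorem stmt_4_general (j : ℕ) (A : ℝ) (hA : 1 ≤ A) :
    ∃ C : ℝ, 0 < C ∧
      ∀ (w : ℝ → ℂ), (∀ i : ℕ, ContDiff ℝ i w) → Function.support w ⊆ Set.Icc 1 2 →
      (∀ i : ℕ, i ≤ j → ∀ y : ℝ, ‖iteratedDeriv i w y‖ ≤ A) →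
      ∀ a b : ℝ, 1 ≤ |b| → 4 * |a| ≤ |b| →
      ‖∫ y : ℝ, w y * e (a * y + b * Real.sqrt y)‖ ≤ C / |b| ^ j := by
  obtain ⟨C, hC, hquadratic⟩ := exists_norm_integral_quadratic_phase_le j
  refine ⟨C * (3 * 6 ^ j * j ! * A), by positivity, fun w hw hsupp hwA a b hb hab => ?_⟩
  have hw' : ContDiff ℝ ∞ w := contDiff_infty.mpr hw
  rw [integral_eq_integral_sq hw'.continuous hsupp]
  exact hquadratic a b (abs_pos.mp (one_pos.trans_le hb)) hab _ _ (by fun_prop)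
    (support_sq_weight_subset hsupp)
    fun i hi u hu => norm_iteratedDeriv_sq_weight_le hw' hwA (abs_le_of_mem_annulus hu) hi

/-- **Non-stationary phase estimate** (used to truncate the dual sum after Voronoi
summation, Lemma 3.4): for `w` smooth supported in `[1,2]` with derivatives up to
order `j` bounded by `A`, and reals `a, b` with `|b| ≥ 1`, `|b| ≥ 4|a|`,
`|∫ w(y) e(ay + b√y) dy| ≤ C |b|^{-j}` with `C = C(j,A)`. -/
theorem stmt_4 (j : ℕ) (hj : 1 ≤ j) (A : ℝ) (hA : 1 ≤ A) :
    ∃ C : ℝ, 0 < C ∧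
      ∀ (w : ℝ → ℂ), (∀ i : ℕ, ContDiff ℝ i w) → Function.support w ⊆ Set.Icc 1 2 →
      (∀ i : ℕ, i ≤ j → ∀ y : ℝ, ‖iteratedDeriv i w y‖ ≤ A) →
      ∀ a b : ℝ, 1 ≤ |b| → 4 * |a| ≤ |b| →
      ‖∫ y : ℝ, w y * e (a * y + b * Real.sqrt y)‖ ≤ C / |b| ^ j :=
  stmt_4_general j A hA
end
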